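/- For real α > 0 and integer n ≥ 2, the following convolution identity holds: n^(α-1) · (f_{α/n} * f_{(α+1)/n} * ⋯ * f_{(α+n-1)/n}) = f_{1/n} * f_{2/n} * ⋯ * f_{(n-1)/n} * f_α, where f_β(t) = t^(β-1)·1_{t>0}. -/

import Mathlib

/-- Convolution of functions supported on the positive reals. -/
noncomputable def conv (f g : ℝ → ℝ) : ℝ → ℝ := fun t => ∫ τ in (0:ℝ)..t, f τ * g (t - τ)

/-- `fp α t = t^(α-1)` for `t > 0`, and `0` otherwise. -/
noncomputable def fp (α : ℝ) : ℝ → ℝ := fun t => if 0 < t then t ^ (α - 1) else 0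

/-- Convolution `fp (α 0) * fp (α 1) * ⋯ * fp (α n)` of `n+1` power functions. -/
noncomputable def multiConv : (n : ℕ) → (Fin (n + 1) → ℝ) → (ℝ → ℝ)
  | 0, α => fp (α 0)
  | n + 1, α => conv (fp (α 0)) (multiConv n (fun i => α i.succ))

/-!
By the Beta integral, `f_a * f_b = Γ(a) Γ(b) / Γ(a + b) · f_{a+b}`, so every convolution of
power functions is `∏ Γ(βᵢ) / Γ(∑ βᵢ) · f_{∑ βᵢ}`. The exponents on the two sides have the same
sum `α + (n - 1) / 2`, and the constants agree by Gauss's multiplication formula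
`n^(α-1) ∏_{k<n} Γ((α + k) / n) = Γ(α) ∏_{k=1}^{n-1} Γ(k / n)`, which follows from the
Bohr–Mollerup characterisation of `Γ` as the log-convex solution of `f (x + 1) = x f x`.
-/

open Finset Set MeasureTheory

lemma convexOn_finset_sum {𝕜 E β ι : Type*} [Semiring 𝕜] [PartialOrder 𝕜] [AddCommMonoid E]
    [AddCommMonoid β] [PartialOrder β] [IsOrderedAddMonoid β] [SMul 𝕜 E] [Module 𝕜 β]
    {t : Set E} (ht : Convex 𝕜 t) (s : Finset ι) {f : ι → E → β}
    (hf : ∀ i ∈ s, ConvexOn 𝕜 t (f i)) : ConvexOn 𝕜 t fun x => ∑ i ∈ s, f i x := by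
  classical
  induction s using Finset.induction_on with
  | empty => simpa using convexOn_const 0 ht
  | insert j s hj ih =>
    simp_rw [sum_insert hj]
    exact (hf j (mem_insert_self j s)).add (ih fun i hi => hf i (mem_insert_of_mem hi))

lemma sum_range_add_div (n : ℕ) (x : ℝ) :
    ∑ k ∈ range (n + 1), (x + k) / (n + 1) = x + ∑ k ∈ range n, (k + 1 : ℝ) / (n + 1) := by
  rw [sum_range_succ']
  push_cast
  simp only [add_div x, add_assoc, sum_add_distrib, sum_const, card_range, nsmul_eq_mul]
  field_simp
  ring

namespace Real

theorem integral_rpow_mul_sub_rpow {a b t : ℝ} (ha : 0 < a) (hb : 0 < b) (ht : 0 < t) :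
    ∫ x in 0..t, x ^ (a - 1) * (t - x) ^ (b - 1) =
      Gamma a * Gamma b / Gamma (a + b) * t ^ (a + b - 1) := by
  have hbeta := Complex.betaIntegral_scaled a b ht
  rw [Complex.betaIntegral_eq_Gamma_mul_div _ _ (by simpa) (by simpa)] at hbeta
  apply Complex.ofReal_injective
  rw [← intervalIntegral.integral_ofReal]
  convert hbeta using 1
  · refine intervalIntegral.integral_congr fun x hx => ?_
    rw [uIcc_of_le ht.le] at hx
    push_cast [Complex.ofReal_cpow hx.1, Complex.ofReal_cpow (sub_nonneg.2 hx.2)]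
    rfl
  · push_cast [Complex.ofReal_cpow ht.le, ← Complex.Gamma_ofReal]
    ring

lemma convexOn_log_Gamma_add_div {c d : ℝ} (hc : 0 < c) (hd : 0 ≤ d) :
    ConvexOn ℝ (Ioi 0) fun x => log (Gamma ((x + d) / c)) := by
  refine ⟨convex_Ioi 0, fun x (hx : 0 < x) y (hy : 0 < y) a b ha hb hab => ?_⟩
  have hxy : (a • x + b • y + d) / c = a • ((x + d) / c) + b • ((y + d) / c) := by
    simp only [smul_eq_mul]
    field_simp
    linear_combination (-d) * hab
  change log (Gamma _) ≤ a • log (Gamma _) + b • log (Gamma _)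
  rw [hxy]
  exact convexOn_log_Gamma.2 (by positivity : (0:ℝ) < (x + d) / c)
    (by positivity : (0:ℝ) < (y + d) / c) ha hb hab

noncomputable def multiplicationGamma (n : ℕ) (x : ℝ) : ℝ :=
  (n + 1 : ℝ) ^ (x - 1) * (∏ k ∈ range (n + 1), Gamma ((x + k) / (n + 1))) /
    ∏ k ∈ range n, Gamma ((k + 1) / (n + 1))

variable (n : ℕ)

lemma multiplicationGamma_pos {x : ℝ} (hx : 0 < x) : 0 < multiplicationGamma n x := by
  unfold multiplicationGamma
  positivity

lemma multiplicationGamma_one : multiplicationGamma n 1 = 1 := by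
  have hlast : Gamma ((1 + n) / (n + 1)) = 1 := by
    rw [add_comm, div_self (by positivity), Gamma_one]
  rw [multiplicationGamma, sub_self, rpow_zero, one_mul, prod_range_succ, hlast, mul_one]
  simp_rw [add_comm (1 : ℝ)]
  exact div_self (by positivity)

lemma multiplicationGamma_add_one {x : ℝ} (hx : 0 < x) :
    multiplicationGamma n (x + 1) = x * multiplicationGamma n x := by
  have hN : (0 : ℝ) < n + 1 := by positivity
  have hshift : ∏ k ∈ range (n + 1), Gamma ((x + 1 + k) / (n + 1)) =
      x / (n + 1) * ∏ k ∈ range (n + 1), Gamma ((x + k) / (n + 1)) := by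
    have hlast : (x + 1 + n) / (n + 1) = x / (n + 1) + 1 := by field_simp; ring
    have hmid (k : ℕ) : (x + 1 + k) / (n + 1) = (x + ((k + 1 : ℕ) : ℝ)) / (n + 1) := by
      push_cast; ring
    rw [prod_range_succ, prod_range_succ' (fun k : ℕ => Gamma ((x + k) / (n + 1))), hlast,
      Gamma_add_one (by positivity)]
    simp only [hmid, Nat.cast_zero, add_zero]
    ring
  rw [multiplicationGamma, multiplicationGamma, hshift, add_sub_cancel_right,
    rpow_sub_one hN.ne']
  field_simp

lemma log_multiplicationGamma_eq : EqOn (log ∘ multiplicationGamma n)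
    (fun x => log (n + 1) * x + ∑ k ∈ range (n + 1), log (Gamma ((x + k) / (n + 1))) -
      (log (n + 1) + log (∏ k ∈ range n, Gamma ((k + 1) / (n + 1))))) (Ioi 0) := by
  intro x (hx : 0 < x)
  have hN : (0 : ℝ) < n + 1 := by positivity
  have hΓ : ∀ k ∈ range (n + 1), Gamma ((x + k) / (n + 1)) ≠ 0 := fun k _ => by positivity
  rw [Function.comp_apply, multiplicationGamma, log_div (by positivity) (by positivity),
    log_mul (by positivity) (by positivity), log_rpow hN, log_prod hΓ]
  ring

lemma multiplicationGamma_log_convex_Ioi : ConvexOn ℝ (Ioi 0) (log ∘ multiplicationGamma n) := by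
  refine ConvexOn.congr ?_ (log_multiplicationGamma_eq n).symm
  simp only [sub_eq_add_neg _ (log _ + _)]
  refine (((convexOn_id (convex_Ioi 0)).smul (log_nonneg ?_)).add ?_).add_const _
  · exact le_add_of_nonneg_left n.cast_nonneg
  · exact convexOn_finset_sum (convex_Ioi 0) _ fun k _ =>
      convexOn_log_Gamma_add_div (by positivity) k.cast_nonneg

lemma multiplicationGamma_eq_Gamma {x : ℝ} (hx : 0 < x) : multiplicationGamma n x = Gamma x :=
  eq_Gamma_of_log_convex (multiplicationGamma_log_convex_Ioi n)
    (multiplicationGamma_add_one n) (multiplicationGamma_pos n) (multiplicationGamma_one n) hx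

/-- Gauss's multiplication formula, with `n + 1` factors. -/
theorem rpow_mul_prod_Gamma_add_div {x : ℝ} (hx : 0 < x) :
    (n + 1 : ℝ) ^ (x - 1) * ∏ k ∈ range (n + 1), Gamma ((x + k) / (n + 1)) =
      Gamma x * ∏ k ∈ range n, Gamma ((k + 1) / (n + 1)) := by
  rw [← multiplicationGamma_eq_Gamma n hx, multiplicationGamma,
    div_mul_cancel₀ _ (by positivity)]

end Real

lemma conv_of_nonpos {f : ℝ → ℝ} (g : ℝ → ℝ) (hf : ∀ t ≤ 0, f t = 0) {t : ℝ} (ht : t ≤ 0) :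
    conv f g t = 0 := by
  rw [conv, intervalIntegral.integral_congr (g := fun _ => 0), intervalIntegral.integral_zero]
  intro τ hτ
  rw [uIcc_of_ge ht] at hτ
  simp [hf τ hτ.2]

lemma conv_const_mul_left (f g : ℝ → ℝ) (c : ℝ) :
    conv (fun t => c * f t) g = fun t => c * conv f g t := by
  funext t
  simp only [conv, mul_assoc, intervalIntegral.integral_const_mul]

lemma conv_const_mul_right (f g : ℝ → ℝ) (c : ℝ) :
    conv f (fun t => c * g t) = fun t => c * conv f g t := by
  funext t
  simp only [conv, mul_left_comm _ c, intervalIntegral.integral_const_mul]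

lemma fp_of_nonpos (a : ℝ) {t : ℝ} (ht : t ≤ 0) : fp a t = 0 := if_neg ht.not_gt

lemma fp_of_pos (a : ℝ) {t : ℝ} (ht : 0 < t) : fp a t = t ^ (a - 1) := if_pos ht

lemma conv_fp_fp {a b : ℝ} (ha : 0 < a) (hb : 0 < b) :
    conv (fp a) (fp b) =
      fun t => Real.Gamma a * Real.Gamma b / Real.Gamma (a + b) * fp (a + b) t := by
  funext t
  rcases le_or_gt t 0 with ht | ht
  · rw [conv_of_nonpos _ (fun s => fp_of_nonpos a) ht, fp_of_nonpos _ ht, mul_zero]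
  -- `fp b 0 = 0` while `0 ^ (b - 1)` need not vanish: the integrands agree only off `τ = t`.
  rw [fp_of_pos _ ht, ← Real.integral_rpow_mul_sub_rpow ha hb ht, conv]
  refine intervalIntegral.integral_congr_ae ?_
  filter_upwards [compl_mem_ae_iff.2 (measure_singleton t)] with τ (hτt : τ ≠ t) hτ
  rw [uIoc_of_le ht.le] at hτ
  rw [fp_of_pos _ hτ.1, fp_of_pos _ (sub_pos.2 (hτ.2.lt_of_ne hτt))]

theorem multiConv_eq_mul_fp : ∀ (n : ℕ) (α : Fin (n + 1) → ℝ), (∀ i, 0 < α i) →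
    multiConv n α = fun t =>
      (∏ i, Real.Gamma (α i)) / Real.Gamma (∑ i, α i) * fp (∑ i, α i) t
  | 0, α, hα => by
    funext t
    rw [multiConv, Fin.prod_univ_one, Fin.sum_univ_one,
      div_self (Real.Gamma_pos_of_pos (hα 0)).ne', one_mul]
  | n + 1, α, hα => by
    have htail : 0 < ∑ i : Fin (n + 1), α i.succ :=
      sum_pos (fun i _ => hα i.succ) univ_nonempty
    rw [multiConv, multiConv_eq_mul_fp n _ fun i => hα i.succ, conv_const_mul_right,
      conv_fp_fp (hα 0) htail]
    funext t
    rw [Fin.sum_univ_succ (f := α), Fin.prod_univ_succ (f := fun i => Real.Gamma (α i))]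
    field_simp [(Real.Gamma_pos_of_pos htail).ne']

/-- Writing `n = m + 2` (so that `n ≥ 2`), for `α > 0`:
`n^(α-1) · (f_{α/n} * f_{(α+1)/n} * ⋯ * f_{(α+n-1)/n}) = f_{1/n} * ⋯ * f_{(n-1)/n} * f_α`. -/
theorem stmt_11 (α : ℝ) (hα : 0 < α) (m : ℕ) :
    (fun t => ((m : ℝ) + 2) ^ (α - 1) *
        multiConv (m + 1) (fun i : Fin (m + 2) => (α + (i : ℕ)) / ((m : ℝ) + 2)) t) =
      conv (multiConv m (fun i : Fin (m + 1) => ((i : ℕ) + 1 : ℝ) / ((m : ℝ) + 2))) (fp α) := by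
  have hN : ((m + 1 : ℕ) : ℝ) + 1 = m + 2 := by push_cast; ring
  have hgauss := Real.rpow_mul_prod_Gamma_add_div (m + 1) hα
  have hsum := sum_range_add_div (m + 1) α
  rw [hN] at hgauss hsum
  have hs : 0 < ∑ i : Fin (m + 1), ((i : ℕ) + 1 : ℝ) / ((m : ℝ) + 2) :=
    sum_pos (fun i _ => by positivity) univ_nonempty
  rw [multiConv_eq_mul_fp _ _ fun i => by positivity, multiConv_eq_mul_fp _ _ fun i => by positivity,
    conv_const_mul_left, conv_fp_fp hs hα]
  funext t
  simp only [Fin.prod_univ_eq_prod_range (fun k => Real.Gamma ((α + k) / ((m : ℝ) + 2))),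
    Fin.prod_univ_eq_prod_range (fun k : ℕ => Real.Gamma ((k + 1) / ((m : ℝ) + 2))),
    Fin.sum_univ_eq_sum_range (fun k => (α + k) / ((m : ℝ) + 2)),
    Fin.sum_univ_eq_sum_range (fun k : ℕ => (k + 1) / ((m : ℝ) + 2))] at hs ⊢
  rw [hsum, add_comm α]
  field_simp [(Real.Gamma_pos_of_pos hs).ne']
  rw [hgauss]
  ring
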